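/- arXiv:2502.18797 — 2 statements merged into one kernel-verified Lean document; each statement's English description precedes it below -/
import Mathlib

section
/- Let G be a connected plane graph with minimum degree at least 3 that contains no cycle of length 4, no cycle of length 7, no cycle of length 9, and no 5-cycle normally adjacent to a 3-cycle. Then any two adjacent 5-faces of G are normally adjacent, i.e., their bounding 5-cycles share exactly one edge together with its two endpoints. -/
namespace Paper

open SimpleGraph

variable {V : Type*}

/-- The fixed-point-free involution on darts reversing each dart. -/
def dartFlip (G : SimpleGraph V) : Equiv.Perm G.Dart :=
  ⟨SimpleGraph.Dart.symm, SimpleGraph.Dart.symm,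
    fun d => SimpleGraph.Dart.symm_symm d, fun d => SimpleGraph.Dart.symm_symm d⟩

/-- A combinatorial embedding (rotation system) of a simple graph: a permutation of the
darts whose cycles are exactly the sets of darts emanating from a common vertex. -/
structure PlaneEmbedding (G : SimpleGraph V) where
  rot : Equiv.Perm G.Dart
  fst_rot : ∀ d : G.Dart, (rot d).fst = d.fst
  rot_cyclic : ∀ d e : G.Dart, d.fst = e.fst → rot.SameCycle d e

/-- The face permutation of a combinatorial embedding; its orbits are the (boundary walks
of the) faces of the embedding. -/
def PlaneEmbedding.facePerm {G : SimpleGraph V} (E : PlaneEmbedding G) : Equiv.Perm G.Dart :=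
  E.rot * dartFlip G

/-- The face (as its set of boundary darts, i.e. the orbit of the face permutation)
containing a given dart. -/
def faceOf {G : SimpleGraph V} (E : PlaneEmbedding G) (d : G.Dart) : Set G.Dart :=
  {e | E.facePerm.SameCycle d e}

/-- The length of the boundary walk of the face containing a given dart; a `k`-face is a
face whose boundary walk has length `k`, i.e. whose dart-orbit has size `k`. -/
noncomputable def faceSize {G : SimpleGraph V} (E : PlaneEmbedding G) (d : G.Dart) : ℕ :=
  (faceOf E d).ncard

/-- The number of faces of the embedding lying in a given connected component. -/
noncomputable def componentFaceCount {G : SimpleGraph V} (E : PlaneEmbedding G)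
    (c : G.ConnectedComponent) : ℕ :=
  Nat.card (Quotient (Setoid.comap
    (Subtype.val : {d : G.Dart // G.connectedComponentMk d.fst = c} → G.Dart)
    (Equiv.Perm.SameCycle.setoid E.facePerm)))

/-- The embedding is plane (genus zero): Euler's formula `V - E + F = 2` holds on each
connected component containing an edge (stated as `2V + 2F = #darts + 4`, using that the
number of darts is twice the number of edges). -/
def PlaneEmbedding.IsPlane {G : SimpleGraph V} (E : PlaneEmbedding G) : Prop :=
  ∀ c : G.ConnectedComponent, (∃ d : G.Dart, G.connectedComponentMk d.fst = c) →
    2 * {v : V | G.connectedComponentMk v = c}.ncard + 2 * componentFaceCount E c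
      = {d : G.Dart | G.connectedComponentMk d.fst = c}.ncard + 4

/-- `G` is a planar graph: it admits a plane (genus-zero) combinatorial embedding. -/
def IsPlanar (G : SimpleGraph V) : Prop :=
  ∃ E : PlaneEmbedding G, E.IsPlane

/-- `G` has no cycle of length `n`. -/
def NoCycleLen (G : SimpleGraph V) (n : ℕ) : Prop :=
  ∀ (v : V) (c : G.Walk v v), c.IsCycle → c.length ≠ n

/-- Two cycles (given as closed walks) are normally adjacent: their intersection is
isomorphic to `K₂`, i.e. they share exactly one edge together with its two endpoints. -/
def NormAdjWalks (G : SimpleGraph V) {a b : V} (c₁ : G.Walk a a) (c₂ : G.Walk b b) : Prop :=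
  ∃ x y : V, x ≠ y ∧ s(x, y) ∈ c₁.edges ∧ s(x, y) ∈ c₂.edges ∧
    (∀ z : V, (z ∈ c₁.support ∧ z ∈ c₂.support) ↔ (z = x ∨ z = y))

/-- `G` has no `5`-cycle normally adjacent to a `3`-cycle. -/
def No5CycleNormAdj3 (G : SimpleGraph V) : Prop :=
  ∀ (a b : V) (c₁ : G.Walk a a) (c₂ : G.Walk b b),
    c₁.IsCycle → c₁.length = 5 → c₂.IsCycle → c₂.length = 3 →
      ¬ NormAdjWalks G c₁ c₂

/-- `d` lists the boundary darts of a face in order, and this boundary is the closed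
walk `v 0, v 1, …, v (n-1), v 0`. -/
def FaceTraversal {G : SimpleGraph V} (E : PlaneEmbedding G) {n : ℕ}
    (v : ZMod n → V) (d : ZMod n → G.Dart) : Prop :=
  (∀ i, (d i).toProd = (v i, v (i + 1))) ∧ ∀ i, E.facePerm (d i) = d (i + 1)

/-- The cycle `v 0, v 1, …, v (n-1), v 0` (with distinct vertices) bounds a face of the
embedding (traversed in one of the two possible directions). -/
def CycleBoundsFace {G : SimpleGraph V} (E : PlaneEmbedding G) {n : ℕ}
    (v : ZMod n → V) : Prop :=
  Function.Injective v ∧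
    ((∃ d, FaceTraversal E v d) ∨ (∃ d, FaceTraversal E (fun i => v (-i)) d))

/-- The `i`-th vertex of the boundary walk of the face containing the dart `d0`. -/
def boundaryVert {G : SimpleGraph V} (E : PlaneEmbedding G) (d0 : G.Dart) (i : ℕ) : V :=
  ((E.facePerm ^ i) d0).fst

/-- The faces containing the darts `d1`, `d2` are adjacent: their boundaries share at
least one edge. -/
def FacesAdjacent {G : SimpleGraph V} (E : PlaneEmbedding G) (d1 d2 : G.Dart) : Prop :=
  ∃ e1 e2 : G.Dart, E.facePerm.SameCycle d1 e1 ∧ E.facePerm.SameCycle d2 e2 ∧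
    e1.edge = e2.edge

/-- The set of vertices on the boundary of the face containing the dart `d`. -/
def faceVerts {G : SimpleGraph V} (E : PlaneEmbedding G) (d : G.Dart) : Set V :=
  {x | ∃ e : G.Dart, E.facePerm.SameCycle d e ∧ e.fst = x}

/-- The set of edges on the boundary of the face containing the dart `d`. -/
def faceEdges {G : SimpleGraph V} (E : PlaneEmbedding G) (d : G.Dart) : Set (Sym2 V) :=
  {s | ∃ e : G.Dart, E.facePerm.SameCycle d e ∧ e.edge = s}

section Configs

variable [Fintype V]

/-- Configuration (1): a `10`-cycle bounding a face together with a `3`-cycle bounding a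
face, normally adjacent to it along one edge, all eleven vertices having degree `3`. -/
def Config1 (G : SimpleGraph V) [DecidableRel G.Adj] (E : PlaneEmbedding G) : Prop :=
  ∃ (v : ZMod 10 → V) (w : ZMod 3 → V) (u : V),
    CycleBoundsFace E v ∧ CycleBoundsFace E w ∧
    ({w 0, w 1, w 2} : Set V) = {v 0, v 1, u} ∧ u ∉ Set.range v ∧
    (∀ i, G.degree (v i) = 3) ∧ G.degree u = 3

/-- Configuration (2): two vertex-disjoint `10`-cycles `x₁…x₁₀` and `y₁…y₁₀` (indexed here
from `0`), each bounding a face, with edges `x₃y₃` and `x₁₀y₁₀`; all `xᵢ` have degree `3`,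
`y₃` and `y₁₀` have degree `4`, the other `yᵢ` have degree `3`. -/
def Config2 (G : SimpleGraph V) [DecidableRel G.Adj] (E : PlaneEmbedding G) : Prop :=
  ∃ x y : ZMod 10 → V,
    CycleBoundsFace E x ∧ CycleBoundsFace E y ∧
    Set.range x ∩ Set.range y = ∅ ∧
    G.Adj (x 2) (y 2) ∧ G.Adj (x 9) (y 9) ∧
    (∀ i, G.degree (x i) = 3) ∧
    G.degree (y 2) = 4 ∧ G.degree (y 9) = 4 ∧
    (∀ i, i ≠ 2 → i ≠ 9 → G.degree (y i) = 3)

/-- Configuration (3): an `8`-cycle bounding a face and a `5`-cycle bounding a face that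
are normally adjacent (sharing exactly one edge and its endpoints), all eleven vertices
having degree `3`. -/
def Config3 (G : SimpleGraph V) [DecidableRel G.Adj] (E : PlaneEmbedding G) : Prop :=
  ∃ (a : ZMod 8 → V) (b : ZMod 5 → V),
    CycleBoundsFace E a ∧ CycleBoundsFace E b ∧
    Set.range a ∩ Set.range b = {a 0, a 1} ∧
    (∃ j : ZMod 5, (b j = a 0 ∧ b (j + 1) = a 1) ∨ (b j = a 1 ∧ b (j + 1) = a 0)) ∧
    (∀ i, G.degree (a i) = 3) ∧ (∀ j, G.degree (b j) = 3)

end Configs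

open Classical in
/-- The function resulting from the operation `Delete_[u](G, f)`: every neighbour of `u`
loses one unit. -/
noncomputable def deleteFun (G : SimpleGraph V) (u : V) (f : V → ℤ) : V → ℤ :=
  fun v => if G.Adj u v then f v - 1 else f v

open Classical in
/-- The function resulting from the operation `DeleteSave_[u; w](G, f)`: every neighbour
of `u` except `w` loses one unit. -/
noncomputable def deleteSaveFun (G : SimpleGraph V) (u w : V) (f : V → ℤ) : V → ℤ :=
  fun v => if G.Adj u v ∧ v ≠ w then f v - 1 else f v

/-- All vertices of the subgraph of `G` induced on `S` can be removed by a sequence of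
legal applications of the `Delete` and `DeleteSave` operations, starting from the value
function `f`. -/
inductive WeaklyReducible (G : SimpleGraph V) : Set V → (V → ℤ) → Prop
  | empty (f : V → ℤ) : WeaklyReducible G ∅ f
  | delete (S : Set V) (f : V → ℤ) (u : V) (hu : u ∈ S)
      (hnn : ∀ v ∈ S \ {u}, 0 ≤ deleteFun G u f v)
      (h : WeaklyReducible G (S \ {u}) (deleteFun G u f)) : WeaklyReducible G S f
  | deleteSave (S : Set V) (f : V → ℤ) (u w : V) (hu : u ∈ S) (hw : w ∈ S \ {u})
      (hadj : G.Adj u w) (hlt : f w < f u)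
      (hnn : ∀ v ∈ S \ {u}, 0 ≤ deleteSaveFun G u w f v)
      (h : WeaklyReducible G (S \ {u}) (deleteSaveFun G u w f)) : WeaklyReducible G S f

/-- `G` is weakly `d`-degenerate: all its vertices can be removed by a sequence of legal
applications of the `Delete` and `DeleteSave` operations, starting from the constant
function of value `d`. -/
def WeaklyDegenerate (G : SimpleGraph V) (d : ℤ) : Prop :=
  WeaklyReducible G Set.univ (fun _ => d)

/-- The canonical cover of `G` with `s = 2`: two disjoint copies of `G`, on vertex set
`V × Fin 2`, with `(u, i)` adjacent to `(v, j)` iff `uv ∈ E(G)` and `i = j`. -/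
def canonicalCover2 (G : SimpleGraph V) : SimpleGraph (V × Fin 2) where
  Adj a b := G.Adj a.1 b.1 ∧ a.2 = b.2
  symm := ⟨fun _ _ h => ⟨h.1.symm, h.2.symm⟩⟩
  loopless := ⟨fun a h => G.loopless.irrefl a.1 h.1⟩

/-- `T` is a strictly `f`-degenerate transversal-candidate set: every nonempty subgraph
`K` of the induced subgraph `H[T]` has a vertex `x` with `deg_K x < f x`. -/
def StrictlyFDegenerateOn {W : Type*} (H : SimpleGraph W) (f : W → ℕ) (T : Set W) : Prop :=
  ∀ K : H.Subgraph, K.verts ⊆ T → K.verts.Nonempty →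
    ∃ x ∈ K.verts, Nat.card (K.neighborSet x) < f x

end Paper

open SimpleGraph

/-!
The boundary walk of a face never backtracks, since `facePerm e = e.symm` would make `e.symm`
a fixed point of the rotation at a vertex of degree at least two; so a 5-face is a pentagon.
Two distinct faces sharing an edge traverse it in opposite directions, so they read
x y a b c and y x r q p. If a = p, the rotation at y would exchange the darts towards x and
towards a, leaving y of degree at most two; symmetrically c ≠ r. Any other common vertex
besides x and y produces a 4-cycle.
-/

open Function

namespace Equiv.Perm

variable {α : Type*} [Finite α]

theorem setOf_sameCycle_eq_image (f : Perm α) (x : α) :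
    {y | f.SameCycle x y} = (fun n => f^[n] x) '' Set.Iio (minimalPeriod f x) := by
  have hx : x ∈ periodicPts f := f.injective.mem_periodicPts x
  ext y
  simp only [Set.mem_ofPred_eq, Set.mem_image, Set.mem_Iio]
  constructor
  · intro h
    obtain ⟨n, rfl⟩ := h.exists_nat_pow_eq
    exact ⟨n % minimalPeriod f x, Nat.mod_lt _ (minimalPeriod_pos_of_mem_periodicPts hx),
      by rw [iterate_mod_minimalPeriod_eq, coe_pow]⟩
  · rintro ⟨n, -, rfl⟩
    exact ⟨n, by rw [zpow_natCast, coe_pow]⟩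

theorem ncard_setOf_sameCycle (f : Perm α) (x : α) :
    {y | f.SameCycle x y}.ncard = minimalPeriod f x := by
  rw [setOf_sameCycle_eq_image, iterate_injOn_Iio_minimalPeriod.ncard_image, ← Finset.coe_range,
    Set.ncard_coe_finset, Finset.card_range]

end Equiv.Perm

namespace Paper

variable {V : Type*} {G : SimpleGraph V}

theorem NoCycleLen.eq_of_adj_of_adj (h4 : NoCycleLen G 4) {a b c d : V} (hac : a ≠ c)
    (hab : G.Adj a b) (hbc : G.Adj b c) (had : G.Adj a d) (hdc : G.Adj d c) : b = d := by
  by_contra hbd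
  refine h4 a (.cons hab (.cons hbc (.cons hdc.symm (.cons had.symm .nil)))) ?_ rfl
  simp [Walk.cons_isCycle_iff, hac, hbd, hab.ne, hbc.ne, had.ne, hac.symm, hab.ne.symm,
    had.ne.symm, hdc.ne.symm]

structure IsPeriodicNonbacktracking (G : SimpleGraph V) (v : ℕ → V) (n : ℕ) : Prop where
  adj : ∀ i, G.Adj (v i) (v (i + 1))
  ne : ∀ i, v (i + 2) ≠ v i
  periodic : Periodic v n

namespace IsPeriodicNonbacktracking

variable {v w : ℕ → V}

theorem ne_of_shared_edge (h4 : NoCycleLen G 4) (hv : IsPeriodicNonbacktracking G v 5)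
    (hw : IsPeriodicNonbacktracking G w 5) (h0 : w 0 = v 1) (h1 : w 1 = v 0)
    (h24 : v 2 ≠ w 4) (h42 : w 2 ≠ v 4) {i j : ℕ} (hi : i ∈ Set.Ico 2 5)
    (hj : j ∈ Set.Ico 2 5) : v i ≠ w j := by
  -- `v` runs along the pentagon x y a b c and `w` along y x r q p.
  have hcx : G.Adj (v 4) (v 0) := hv.periodic 0 ▸ hv.adj 4
  have hxr : G.Adj (v 0) (w 2) := h1 ▸ hw.adj 1
  have hpy : G.Adj (v 1) (w 4) := (h0 ▸ hw.periodic 0 ▸ hw.adj 4).symm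
  have hxb : v 0 ≠ v 3 := hv.periodic 0 ▸ hv.ne 3
  have hyc : v 1 ≠ v 4 := hv.periodic 1 ▸ hv.ne 4
  have hry : w 2 ≠ v 1 := h0 ▸ hw.ne 0
  have hxp : v 0 ≠ w 4 := h1 ▸ hw.periodic 1 ▸ hw.ne 4
  obtain ⟨hi2, hi5⟩ := hi
  obtain ⟨hj2, hj5⟩ := hj
  interval_cases i <;> interval_cases j <;> intro h
  · exact hxb (h4.eq_of_adj_of_adj (hv.ne 2).symm (hv.adj 2) (hv.adj 3) (h ▸ hxr).symm
      hcx.symm).symm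
  · exact hry (h4.eq_of_adj_of_adj (hv.ne 0).symm (hv.adj 0) (hv.adj 1) hxr (h ▸ hw.adj 2)).symm
  · exact h24 h
  · exact (hv.ne 1) (h4.eq_of_adj_of_adj (hv.ne 0).symm (hv.adj 0) (hv.adj 1) (h ▸ hxr)
      (hv.adj 2).symm).symm
  · exact h24 (h4.eq_of_adj_of_adj (hv.ne 1).symm (hv.adj 1) (hv.adj 2) hpy (h ▸ hw.adj 3).symm)
  · exact hyc (h4.eq_of_adj_of_adj hxb (hv.adj 0) (h ▸ hpy) hcx.symm (hv.adj 3).symm)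
  · exact h42 h.symm
  · exact hyc (h4.eq_of_adj_of_adj hxp (hv.adj 0) hpy hcx.symm (h ▸ hw.adj 3))
  · exact (hv.ne 2) (h4.eq_of_adj_of_adj (hv.ne 1).symm (hv.adj 1) (hv.adj 2) (h ▸ hpy)
      (hv.adj 3).symm).symm

theorem image_inter_image_eq_pair (h4 : NoCycleLen G 4) (hv : IsPeriodicNonbacktracking G v 5)
    (hw : IsPeriodicNonbacktracking G w 5) (h0 : w 0 = v 1) (h1 : w 1 = v 0)
    (h24 : v 2 ≠ w 4) (h42 : w 2 ≠ v 4) :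
    v '' Set.Iio 5 ∩ w '' Set.Iio 5 = {v 0, v 1} := by
  ext z
  constructor
  · rintro ⟨⟨i, hi, rfl⟩, j, hj, hji⟩
    by_contra hz
    simp only [Set.mem_Iio, Set.mem_insert_iff, Set.mem_singleton_iff, not_or] at hi hj hz
    have hi2 : 2 ≤ i := by
      by_contra!
      interval_cases i <;> simp_all
    have hj2 : 2 ≤ j := by
      by_contra!
      interval_cases j <;> simp_all
    exact ne_of_shared_edge h4 hv hw h0 h1 h24 h42 ⟨hi2, hi⟩ ⟨hj2, hj⟩ hji.symm
  · rintro (rfl | rfl)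
    · exact ⟨⟨0, by norm_num, rfl⟩, 1, by norm_num, h1⟩
    · exact ⟨⟨1, by norm_num, rfl⟩, 0, by norm_num, h0⟩

end IsPeriodicNonbacktracking

namespace PlaneEmbedding

variable (E : PlaneEmbedding G)

theorem facePerm_apply (e : G.Dart) : E.facePerm e = E.rot e.symm := rfl

theorem facePerm_fst (e : G.Dart) : (E.facePerm e).fst = e.snd := E.fst_rot e.symm

theorem faceSize_eq_of_sameCycle {d d' : G.Dart} (h : E.facePerm.SameCycle d d') :
    faceSize E d = faceSize E d' := by
  simp only [faceSize, faceOf]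
  congr 1
  ext e
  exact ⟨h.symm.trans, h.trans⟩

theorem faceVerts_eq_of_sameCycle {d d' : G.Dart} (h : E.facePerm.SameCycle d d') :
    faceVerts E d = faceVerts E d' := by
  ext x
  exact ⟨fun ⟨e, he, hx⟩ => ⟨e, h.symm.trans he, hx⟩, fun ⟨e, he, hx⟩ => ⟨e, h.trans he, hx⟩⟩

theorem boundaryVert_succ (d : G.Dart) (i : ℕ) :
    boundaryVert E d (i + 1) = ((E.facePerm ^ i) d).snd := by
  rw [boundaryVert, pow_succ', Equiv.Perm.mul_apply, facePerm_fst]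

theorem boundaryVert_one (d : G.Dart) : boundaryVert E d 1 = d.snd := by
  rw [← zero_add 1, boundaryVert_succ, pow_zero, Equiv.Perm.one_apply]

variable [Fintype V] [DecidableRel G.Adj]

theorem degree_le_of_rot_pow_apply_eq {k : ℕ} (hk : 0 < k) {A : G.Dart}
    (h : (E.rot ^ k) A = A) : G.degree A.fst ≤ k := by
  classical
  have hper : IsPeriodicPt E.rot k A := by rwa [IsPeriodicPt, IsFixedPt, ← Equiv.Perm.coe_pow]
  rw [← card_neighborFinset_eq_degree]
  refine (Finset.card_le_card (t := (Finset.range k).image fun i => ((E.rot ^ i) A).snd) ?_).trans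
    (Finset.card_image_le.trans (Finset.card_range k).le)
  intro u hu
  obtain ⟨n, hn⟩ :=
    (E.rot_cyclic A ⟨(A.fst, u), (G.mem_neighborFinset _ _).1 hu⟩ rfl).exists_nat_pow_eq
  refine Finset.mem_image.2 ⟨n % k, Finset.mem_range.2 (Nat.mod_lt _ hk), ?_⟩
  rw [Equiv.Perm.coe_pow, hper.iterate_mod_apply, ← Equiv.Perm.coe_pow, hn]

theorem facePerm_ne_symm {e : G.Dart} (hdeg : 2 ≤ G.degree e.snd) : E.facePerm e ≠ e.symm := by
  intro h
  have := E.degree_le_of_rot_pow_apply_eq one_pos (A := e.symm) (by rw [pow_one]; exact h)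
  exact this.not_gt hdeg

theorem facePerm_snd_ne_fst {e d : G.Dart} (hdeg : 3 ≤ G.degree e.snd)
    (hd : E.facePerm d = e.symm) : (E.facePerm e).snd ≠ d.fst := by
  intro h
  have hsnd : d.snd = e.snd := by rw [← E.facePerm_fst d, hd]; rfl
  have hsymm : E.facePerm e = d.symm :=
    Dart.ext _ _ (Prod.ext ((E.facePerm_fst e).trans hsnd.symm) h)
  have h2 : (E.rot ^ 2) e.symm = e.symm := by
    rw [pow_two, Equiv.Perm.mul_apply, ← E.facePerm_apply, hsymm, ← E.facePerm_apply, hd]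
  have := E.degree_le_of_rot_pow_apply_eq two_pos h2
  exact this.not_gt hdeg

theorem faceSize_eq_minimalPeriod (d : G.Dart) :
    faceSize E d = minimalPeriod E.facePerm d := by
  classical
  exact E.facePerm.ncard_setOf_sameCycle d

theorem facePerm_pow_faceSize (d : G.Dart) : (E.facePerm ^ faceSize E d) d = d := by
  rw [faceSize_eq_minimalPeriod, Equiv.Perm.coe_pow]
  exact isPeriodicPt_minimalPeriod _ _

theorem faceVerts_eq_image (d : G.Dart) :
    faceVerts E d = boundaryVert E d '' Set.Iio (faceSize E d) := by
  classical
  have hface : faceVerts E d = (fun e : G.Dart => e.fst) '' {e | E.facePerm.SameCycle d e} := by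
    ext x; simp [faceVerts]
  rw [hface, Equiv.Perm.setOf_sameCycle_eq_image, Set.image_image, faceSize_eq_minimalPeriod]
  rfl

theorem boundaryVert_isPeriodicNonbacktracking (hdeg : ∀ v, 2 ≤ G.degree v) (d : G.Dart) :
    IsPeriodicNonbacktracking G (boundaryVert E d) (faceSize E d) where
  adj i := by
    rw [boundaryVert_succ]
    exact ((E.facePerm ^ i) d).adj
  ne i h := by
    set e := (E.facePerm ^ i) d
    refine E.facePerm_ne_symm (hdeg e.snd) (Dart.ext _ _ (Prod.ext (E.facePerm_fst e) ?_))
    calc (E.facePerm e).snd = boundaryVert E d (i + 2) := by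
          rw [boundaryVert_succ, pow_succ', Equiv.Perm.mul_apply]
      _ = e.fst := h
  periodic i := by
    rw [boundaryVert, boundaryVert, pow_add, Equiv.Perm.mul_apply, facePerm_pow_faceSize]

theorem boundaryVert_two_ne_boundaryVert_symm {e : G.Dart} (hdeg : 3 ≤ G.degree e.snd) {n : ℕ}
    (hn : faceSize E e.symm = n + 1) : boundaryVert E e 2 ≠ boundaryVert E e.symm n := by
  have hd : E.facePerm ((E.facePerm ^ n) e.symm) = e.symm := by
    rw [← Equiv.Perm.mul_apply, ← pow_succ', ← hn, facePerm_pow_faceSize]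
  rw [show 2 = 1 + 1 from rfl, boundaryVert_succ, pow_one]
  exact E.facePerm_snd_ne_fst hdeg hd

end PlaneEmbedding

end Paper

theorem statement10_general {V : Type*} [Fintype V] (G : SimpleGraph V) [DecidableRel G.Adj]
    (E : Paper.PlaneEmbedding G)
    (hmin : ∀ v : V, 3 ≤ G.degree v)
    (h4 : Paper.NoCycleLen G 4) :
    ∀ d1 d2 : G.Dart, Paper.faceSize E d1 = 5 → Paper.faceSize E d2 = 5 →
      ¬ E.facePerm.SameCycle d1 d2 → Paper.FacesAdjacent E d1 d2 →
      ∃ x y : V, x ≠ y ∧ G.Adj x y ∧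
        Paper.faceVerts E d1 ∩ Paper.faceVerts E d2 = {x, y} ∧
        s(x, y) ∈ Paper.faceEdges E d1 ∧ s(x, y) ∈ Paper.faceEdges E d2 := by
  rintro d1 d2 hs1 hs2 hnsc ⟨e, e', he, he', hee'⟩
  obtain rfl : e' = e.symm := by
    rcases (dart_edge_eq_iff e e').1 hee' with rfl | rfl
    · exact absurd (he.trans he'.symm) hnsc
    · rfl
  rw [E.faceSize_eq_of_sameCycle he] at hs1
  rw [E.faceSize_eq_of_sameCycle he'] at hs2
  have hdeg : ∀ v, 2 ≤ G.degree v := fun v => (hmin v).trans' (by norm_num)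
  have hv := E.boundaryVert_isPeriodicNonbacktracking hdeg e
  have hw := E.boundaryVert_isPeriodicNonbacktracking hdeg e.symm
  rw [hs1] at hv
  rw [hs2] at hw
  refine ⟨e.fst, e.snd, e.adj.ne, e.adj, ?_, ⟨e, he, rfl⟩, ⟨e.symm, he', e.edge_symm⟩⟩
  rw [E.faceVerts_eq_of_sameCycle he, E.faceVerts_eq_of_sameCycle he', E.faceVerts_eq_image,
    E.faceVerts_eq_image, hs1, hs2, ← E.boundaryVert_one e]
  exact hv.image_inter_image_eq_pair h4 hw (E.boundaryVert_one e).symm (E.boundaryVert_one e.symm)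
    (E.boundaryVert_two_ne_boundaryVert_symm (hmin _) hs2)
    (E.boundaryVert_two_ne_boundaryVert_symm (e := e.symm) (hmin _) hs1)

/-- Any two adjacent 5-faces are normally adjacent: their bounding 5-cycles share
exactly one edge together with its two endpoints. -/
theorem statement10 {V : Type*} [Fintype V] (G : SimpleGraph V) [DecidableRel G.Adj]
    (hconn : G.Connected)
    (E : Paper.PlaneEmbedding G) (hE : E.IsPlane)
    (hmin : ∀ v : V, 3 ≤ G.degree v)
    (h4 : Paper.NoCycleLen G 4) (h7 : Paper.NoCycleLen G 7)
    (h9 : Paper.NoCycleLen G 9) (h53 : Paper.No5CycleNormAdj3 G) :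
    ∀ d1 d2 : G.Dart, Paper.faceSize E d1 = 5 → Paper.faceSize E d2 = 5 →
      ¬ E.facePerm.SameCycle d1 d2 → Paper.FacesAdjacent E d1 d2 →
      ∃ x y : V, x ≠ y ∧ G.Adj x y ∧
        Paper.faceVerts E d1 ∩ Paper.faceVerts E d2 = {x, y} ∧
        s(x, y) ∈ Paper.faceEdges E d1 ∧ s(x, y) ∈ Paper.faceEdges E d2 :=
  statement10_general G E hmin h4
end

section
/- Let G be a connected plane graph with minimum degree at least 3 that contains no cycle of length 4, no cycle of length 7, no cycle of length 9, and no 5-cycle normally adjacent to a 3-cycle. Then G has no 7-face, i.e., no face of G has boundary walk of length 7. -/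
open Function

lemma Equiv.Perm.pow_ncard_sameCycle_apply {α : Type*} [Finite α] (f : Equiv.Perm α) (x : α) :
    (f ^ {y | f.SameCycle x y}.ncard) x = x := by
  classical
  have := Fintype.ofFinite α
  by_cases hx : f x = x
  · have : {y | f.SameCycle x y} = {x} := by
      ext y
      refine ⟨fun ⟨k, hk⟩ => ?_, fun hy => hy ▸ Equiv.Perm.SameCycle.refl f x⟩
      rw [Equiv.Perm.zpow_apply_eq_self_of_apply_eq_self hx] at hk
      exact hk.symm
    simpa [this] using hx
  · have : {y | f.SameCycle x y} = (f.cycleOf x).support := by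
      ext y
      rw [Finset.mem_coe, Equiv.Perm.mem_support_cycleOf_iff,
        and_iff_left (Equiv.Perm.mem_support.2 hx)]
      rfl
    rw [this, Set.ncard_coe_finset, ← f.pow_mod_card_support_cycleOf_self_apply, Nat.mod_self,
      pow_zero, Equiv.Perm.one_apply]

lemma Function.Periodic.injOn_Iio {α : Type*} {v : ℕ → α} {n : ℕ} (hper : Periodic v n)
    (h : ∀ i k, 0 < k → 2 * k ≤ n → v (i + k) ≠ v i) : Set.InjOn v (Set.Iio n) := by
  intro a ha b hb heq
  rw [Set.mem_Iio] at ha hb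
  by_contra hne
  wlog hab : a < b generalizing a b
  · exact this hb ha heq.symm (Ne.symm hne) (by omega)
  by_cases hk : 2 * (b - a) ≤ n
  · exact h a (b - a) (by omega) hk (by rw [Nat.add_sub_cancel' hab.le]; exact heq.symm)
  · -- the complementary arc from `b` round to `a + n` is the shorter one
    refine h b (n - (b - a)) (by omega) (by omega) ?_
    rw [show b + (n - (b - a)) = a + n by omega, hper, heq]

lemma Fin.val_eq_add_one_mod_of_val_sub_eq_one {n : ℕ} {a b : Fin n} (h : (a - b).val = 1) :
    a.val = (b.val + 1) % n := by
  have ha := a.isLt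
  rcases le_or_gt b a with hle | hlt
  · rw [Fin.coe_sub_iff_le.2 hle] at h
    rw [Nat.mod_eq_of_lt (by omega)]
    omega
  · rw [Fin.coe_sub_iff_lt.2 hlt] at h
    rw [show b.val + 1 = n by omega, Nat.mod_self]
    omega

namespace SimpleGraph

variable {V : Type*} {G : SimpleGraph V}

lemma exists_isCycle_length_of_periodic {v : ℕ → V} {n : ℕ} (hn : 2 < n) (hper : Periodic v n)
    (hadj : ∀ i, G.Adj (v i) (v (i + 1))) (hinj : Set.InjOn v (Set.Iio n)) :
    ∃ (u : V) (c : G.Walk u u), c.IsCycle ∧ c.length = n := by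
  have hadj_succ : ∀ a b : Fin n, (a - b).val = 1 → G.Adj (v b) (v a) := fun a b h => by
    rw [Fin.val_eq_add_one_mod_of_val_sub_eq_one h, hper.map_mod_nat]
    exact hadj b
  refine (cycleGraph_isContained_iff hn).1 ⟨⟨⟨fun i => v i, fun {a b} hab => ?_⟩, ?_⟩⟩
  · rcases cycleGraph_adj'.1 hab with h | h
    · exact (hadj_succ a b h).symm
    · exact hadj_succ b a h
  · exact fun a b hab => Fin.ext (hinj a.isLt b.isLt hab)

lemma exists_isCycle_length_four {a b c d : V} (hab : G.Adj a b) (hbc : G.Adj b c)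
    (hcd : G.Adj c d) (hda : G.Adj d a) (hac : a ≠ c) (hbd : b ≠ d) :
    ∃ (u : V) (p : G.Walk u u), p.IsCycle ∧ p.length = 4 := by
  refine ⟨a, .cons hab (.cons hbc (.cons hcd (.cons hda .nil))), ?_, rfl⟩
  have := hab.ne; have := hbc.ne; have := hcd.ne; have := hda.ne
  simp only [Walk.cons_isCycle_iff, Walk.cons_isPath_iff, Walk.IsPath.nil, Walk.support_cons,
    Walk.support_nil, Walk.edges_cons, Walk.edges_nil, List.mem_cons, List.not_mem_nil,
    Sym2.eq_iff]
  grind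

lemma exists_isCycle_length_four_or_seven {v : ℕ → V} (hper : Periodic v 7)
    (hadj : ∀ i, G.Adj (v i) (v (i + 1))) (hback : ∀ i, v (i + 2) ≠ v i) :
    ∃ (u : V) (c : G.Walk u u), c.IsCycle ∧ (c.length = 4 ∨ c.length = 7) := by
  by_cases h3 : ∃ i, v (i + 3) = v i
  · obtain ⟨i, hi⟩ := h3
    have hclose : G.Adj (v (i + 6)) (v (i + 3)) := by
      rw [hi, ← hper i]
      exact hadj (i + 6)
    obtain ⟨u, c, hc, hlen⟩ := exists_isCycle_length_four (hadj (i + 3)) (hadj (i + 4))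
      (hadj (i + 5)) hclose (hback (i + 3)).symm (hback (i + 4)).symm
    exact ⟨u, c, hc, .inl hlen⟩
  · simp only [not_exists] at h3
    have hinj : Set.InjOn v (Set.Iio 7) := hper.injOn_Iio fun i k hk hk7 => by
      obtain rfl | rfl | rfl : k = 1 ∨ k = 2 ∨ k = 3 := by omega
      exacts [(hadj i).ne', hback i, h3 i]
    obtain ⟨u, c, hc, hlen⟩ := exists_isCycle_length_of_periodic (by norm_num) hper hadj hinj
    exact ⟨u, c, hc, .inr hlen⟩

end SimpleGraph

namespace Paper

open SimpleGraph

variable {V : Type*} {G : SimpleGraph V}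

namespace PlaneEmbedding

variable (E : PlaneEmbedding G)

lemma facePerm_apply_fst (d : G.Dart) : (E.facePerm d).fst = d.snd :=
  E.fst_rot d.symm

lemma facePerm_ne_symm_s12 {d : G.Dart} [Fintype (G.neighborSet d.snd)] (hd : 2 ≤ G.degree d.snd) :
    E.facePerm d ≠ d.symm := by
  intro h
  have hfix : E.rot d.symm = d.symm := h
  obtain ⟨y, hy, hne⟩ := Finset.exists_mem_ne (hd : 1 < (G.neighborFinset d.snd).card) d.fst
  rw [mem_neighborFinset] at hy
  -- the rotation at `d.snd` fixes `d.symm`, so its single orbit there misses the dart towards `y`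
  obtain ⟨k, hk⟩ := E.rot_cyclic d.symm ⟨(d.snd, y), hy⟩ rfl
  rw [Equiv.Perm.zpow_apply_eq_self_of_apply_eq_self hfix] at hk
  exact hne (congrArg (fun e : G.Dart => e.snd) hk).symm

end PlaneEmbedding

lemma boundaryVert_adj (E : PlaneEmbedding G) (d : G.Dart) (i : ℕ) :
    G.Adj (boundaryVert E d i) (boundaryVert E d (i + 1)) := by
  have := ((E.facePerm ^ i) d).adj
  rwa [← E.facePerm_apply_fst, ← Equiv.Perm.mul_apply, ← pow_succ'] at this

lemma boundaryVert_periodic [Finite G.Dart] (E : PlaneEmbedding G) (d : G.Dart) :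
    Periodic (boundaryVert E d) (faceSize E d) := by
  intro i
  simp only [boundaryVert, pow_add, Equiv.Perm.mul_apply]
  rw [faceSize, faceOf, E.facePerm.pow_ncard_sameCycle_apply]

lemma boundaryVert_add_two_ne [Fintype V] [DecidableRel G.Adj] (E : PlaneEmbedding G)
    (hdeg : ∀ x, 2 ≤ G.degree x) (d : G.Dart) (i : ℕ) :
    boundaryVert E d (i + 2) ≠ boundaryVert E d i := by
  intro h
  set e := (E.facePerm ^ i) d
  refine E.facePerm_ne_symm_s12 (hdeg e.snd) (Dart.ext _ _ (Prod.ext (E.facePerm_apply_fst e) ?_))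
  rw [← E.facePerm_apply_fst]
  simp only [boundaryVert, pow_succ', Equiv.Perm.mul_apply] at h
  exact h

end Paper

open SimpleGraph

theorem statement12_general {V : Type*} [Fintype V] (G : SimpleGraph V) [DecidableRel G.Adj]
    (E : Paper.PlaneEmbedding G)
    (hmin : ∀ v : V, 3 ≤ G.degree v)
    (h4 : Paper.NoCycleLen G 4) (h7 : Paper.NoCycleLen G 7) :
    ∀ d0 : G.Dart, Paper.faceSize E d0 ≠ 7 := by
  intro d0 hface
  have hper : Periodic (Paper.boundaryVert E d0) 7 := hface ▸ Paper.boundaryVert_periodic E d0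
  obtain ⟨u, c, hc, h4len | h7len⟩ := exists_isCycle_length_four_or_seven hper
    (Paper.boundaryVert_adj E d0)
    (Paper.boundaryVert_add_two_ne E (fun x => (hmin x).trans' (by norm_num)) d0)
  · exact h4 u c hc h4len
  · exact h7 u c hc h7len

/-- There are no 7-faces. -/
theorem statement12 {V : Type*} [Fintype V] (G : SimpleGraph V) [DecidableRel G.Adj]
    (hconn : G.Connected)
    (E : Paper.PlaneEmbedding G) (hE : E.IsPlane)
    (hmin : ∀ v : V, 3 ≤ G.degree v)
    (h4 : Paper.NoCycleLen G 4) (h7 : Paper.NoCycleLen G 7)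
    (h9 : Paper.NoCycleLen G 9) (h53 : Paper.No5CycleNormAdj3 G) :
    ∀ d0 : G.Dart, Paper.faceSize E d0 ≠ 7 :=
  statement12_general G E hmin h4 h7
end
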